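/- Let G be a Hausdorff abelian group, H a closed subgroup such that H and G/H are both reflexive, protodiscrete, and have no infinite compact subsets. Then for every compact subset K of the dual group G^∧ there exists an open subgroup N of G with K ⊆ N^⊥ = {χ ∈ G^∧ : χ(N) = {1}}. -/

import Mathlib

open Pointwise Function

noncomputable section

/-- The canonical evaluation homomorphism of a topological abelian group into its
Pontryagin bidual, `x ↦ (χ ↦ χ x)`. -/
noncomputable def pontryaginEval (G : Type*) [CommGroup G] [TopologicalSpace G]
    [IsTopologicalGroup G] : G →* PontryaginDual (PontryaginDual G) where
  toFun x :=
    { toFun := fun χ => χ x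
      map_one' := rfl
      map_mul' := fun _ _ => rfl
      continuous_toFun :=
        (continuous_eval_const (F := ContinuousMonoidHom G Circle) x :) }
  map_one' := ContinuousMonoidHom.ext fun χ => map_one χ
  map_mul' x y := ContinuousMonoidHom.ext fun χ => map_mul χ x y

/-- A topological group is protodiscrete (linear) if open subgroups form a
neighborhood base at the identity. -/
def Protodiscrete (G : Type*) [Group G] [TopologicalSpace G] : Prop :=
  ∀ U ∈ nhds (1 : G), ∃ V : Subgroup G, IsOpen (V : Set G) ∧ (V : Set G) ⊆ U

/-- A topological group is precompact (totally bounded) if every neighborhood of the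
identity has finitely many translates covering the group. -/
def Precompact (G : Type*) [Group G] [TopologicalSpace G] : Prop :=
  ∀ U ∈ nhds (1 : G), ∃ F : Finset G, ∀ x : G, ∃ f ∈ F, x ∈ f • U

/-- A topological abelian group is (Pontryagin) reflexive if the canonical evaluation
map into its bidual is a topological isomorphism. -/
def PontryaginReflexive (G : Type*) [CommGroup G] [TopologicalSpace G]
    [IsTopologicalGroup G] : Prop :=
  IsHomeomorph (pontryaginEval G)

/-- A subgroup is dually embedded if every continuous character of it extends to a
continuous character of the ambient group. -/
def DuallyEmbedded {G : Type*} [CommGroup G] [TopologicalSpace G] [IsTopologicalGroup G]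
    (L : Subgroup G) : Prop :=
  ∀ χ : PontryaginDual L, ∃ ψ : PontryaginDual G, ∀ x : L, ψ (x : G) = χ x

/-- The annihilator of a subset `K` of `G` in the dual group. -/
def annihilator {G : Type*} [CommGroup G] [TopologicalSpace G] [IsTopologicalGroup G]
    (K : Set G) : Subgroup (PontryaginDual G) where
  carrier := {χ | ∀ x ∈ K, χ x = 1}
  one_mem' := fun x _ => rfl
  mul_mem' := by
    intro a b ha hb x hx
    show a x * b x = 1
    rw [ha x hx, hb x hx, one_mul]
  inv_mem' := by
    intro a ha x hx
    show (a x)⁻¹ = 1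
    rw [ha x hx, inv_one]

/-- A `P`-space: every countable intersection of open sets is open. -/
def IsPSpace (X : Type*) [TopologicalSpace X] : Prop :=
  ∀ s : ℕ → Set X, (∀ n, IsOpen (s n)) → IsOpen (⋂ n, s n)

/-- A set is `Gδ`-dense if it meets every nonempty `Gδ`-set. -/
def GdeltaDense {X : Type*} [TopologicalSpace X] (s : Set X) : Prop :=
  ∀ t : ℕ → Set X, (∀ n, IsOpen (t n)) → (⋂ n, t n).Nonempty → (s ∩ ⋂ n, t n).Nonempty

/-- The graph of a homomorphism, as a subgroup of the product. -/
def graphSubgroup {H₁ H₂ : Type*} [CommGroup H₁] [CommGroup H₂] (φ : H₁ →* H₂) :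
    Subgroup (H₁ × H₂) where
  carrier := {p | p.2 = φ p.1}
  one_mem' := (map_one φ).symm
  mul_mem' := by
    rintro ⟨a, b⟩ ⟨c, d⟩ hb hd
    simp only [Set.mem_setOf_eq] at *
    simp [hb, hd]
  inv_mem' := by
    rintro ⟨a, b⟩ h
    simp only [Set.mem_setOf_eq] at *
    simp [h]

/-- The Σ-product of `D` copies of the circle group inside `𝕋^D`. -/
def sigmaProd (D : Type*) : Subgroup (D → Circle) where
  carrier := {x | {d | x d ≠ 1}.Countable}
  one_mem' := by simp
  mul_mem' := by
    intro a b ha hb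
    refine Set.Countable.mono ?_ (ha.union hb)
    intro d hd
    simp only [Set.mem_union, Set.mem_setOf_eq]
    by_contra h
    push_neg at h
    exact hd (by show a d * b d = 1; rw [h.1, h.2, one_mul])
  inv_mem' := by
    intro a ha
    refine Set.Countable.mono ?_ ha
    intro d hd
    simp only [Set.mem_setOf_eq] at *
    simpa [inv_eq_one] using hd

/-- The group of continuous `Circle`-valued functions on `Y`, as a subgroup of the
product `Y → Circle`; the subspace topology is the topology of pointwise convergence. -/
def Cp (Y : Type*) [TopologicalSpace Y] : Subgroup (Y → Circle) where
  carrier := {f | Continuous f}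
  one_mem' := continuous_const
  mul_mem' := fun hf hg => hf.mul hg
  inv_mem' := fun hf => hf.inv

/-- The one-point Lindelöfication of a discrete set `D`: the point `none` has the
co-countable sets as neighborhoods, all other points are isolated. -/
def Lind (D : Type*) := Option D

instance (D : Type*) : TopologicalSpace (Lind D) where
  IsOpen U := (none : Option D) ∈ U → {d : D | (some d : Option D) ∉ U}.Countable
  isOpen_univ := by intro _; exact Set.Countable.mono (fun d hd => hd trivial) Set.countable_empty
  isOpen_inter := by
    intro U V hU hV h
    refine Set.Countable.mono ?_ ((hU h.1).union (hV h.2))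
    intro d hd
    simp only [Set.mem_union, Set.mem_setOf_eq] at *
    by_contra hc
    push_neg at hc
    exact hd ⟨hc.1, hc.2⟩
  isOpen_sUnion := by
    intro S hS h
    obtain ⟨U, hUS, hU⟩ := h
    refine Set.Countable.mono ?_ (hS U hUS hU)
    intro d hd
    simp only [Set.mem_setOf_eq] at *
    exact fun hdU => hd ⟨U, hUS, hdU⟩

end

/-!
Restricted to `H`, the compact set `K` becomes a compact subset of `H^∧`. For a protodiscrete
group `A` with continuous evaluation map, a compact `C ⊆ A^∧` is annihilated by an open subgroup:
the functionals on `A^∧` mapping `C` into the open right half circle form a neighbourhood of the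
identity in the bidual, its preimage in `A` contains an open subgroup `V`, and `χ(V)` is then a
subgroup of the circle inside the right half circle, hence trivial.

So some open subgroup `V` of `H` is annihilated by `K`, and protodiscreteness of `G/H` yields an
open subgroup `N` of `G` with `N ∩ H ⊆ V`. Every `χ ∈ K` kills `N ∩ H`, so it factors through the
open subgroup `π N` of `G/H` and, the circle being divisible, extends to a character of `G/H`. Since
compact subsets of `G/H` are finite, `(G/H)^∧` carries the topology of pointwise convergence, in
which the set of all these extensions is compact. Applying the first step to `G/H` gives an open
subgroup `W` annihilating all of them, and `N ∩ π⁻¹ W` is the required open subgroup of `G`.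
-/

open Topology

noncomputable instance : DivisibleBy (Additive Circle) ℤ :=
  Circle.exp_surjective.divisibleBy Circle.expHom fun x n => map_zsmul Circle.expHom n x

theorem Subgroup.exists_circle_hom_extension {A : Type*} [CommGroup A] (B : Subgroup A)
    (f : B →* Circle) : ∃ g : A →* Circle, ∀ b : B, g b = f b := by
  obtain ⟨g, hg⟩ := (Module.Baer.of_divisible (Additive Circle)).extension_property_addMonoidHom
    B.subtype.toAdditive (fun _ _ h => Subtype.ext (congrArg Additive.toMul h)) f.toAdditive
  exact ⟨MonoidHom.toAdditive.symm g, fun b => congrArg Additive.toMul (DFunLike.congr_fun hg b)⟩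

theorem ContinuousMap.isInducing_coeFn_of_isCompact_finite {Z Y : Type*} [TopologicalSpace Z]
    [TopologicalSpace Y] (hZ : ∀ C : Set Z, IsCompact C → C.Finite) :
    IsInducing ((⇑) : C(Z, Y) → Z → Y) := by
  refine ⟨le_antisymm (continuous_iff_le_induced.1 (continuous_pi continuous_eval_const))
    (le_generateFrom ?_)⟩
  rintro _ ⟨C, hC, O, hO : IsOpen O, rfl⟩
  refine ⟨⋂ z ∈ C, (fun f : Z → Y => f z) ⁻¹' O, ?_, by ext; simp [Set.MapsTo]⟩
  exact (hZ C hC).isOpen_biInter fun z _ => hO.preimage (continuous_apply z)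

theorem exists_isOpen_subgroup_subset_annihilator {A : Type*} [CommGroup A] [TopologicalSpace A]
    [IsTopologicalGroup A] (hA : Continuous (pontryaginEval A)) (hp : Protodiscrete A)
    {C : Set (PontryaginDual A)} (hC : IsCompact C) :
    ∃ V : Subgroup A, IsOpen (V : Set A) ∧ C ⊆ annihilator (V : Set A) := by
  set P : Set (PontryaginDual (PontryaginDual A)) :=
    {ξ | Set.MapsTo ξ C (Circle.centeredArc (Real.pi / 2))}
  have hP : IsOpen P := isOpen_induced
    (ContinuousMap.isOpen_setOfPred_mapsTo hC (Circle.isOpen_centeredArc _))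
  have h1P : pontryaginEval A 1 ∈ P := by
    rw [map_one]
    intro _ _
    rw [Circle.mem_centeredArc (by linarith [Real.pi_pos])]
    simp [Real.pi_pos]
  obtain ⟨V, hV, hVP⟩ := hp _ ((hP.preimage hA).mem_nhds h1P)
  exact ⟨V, hV, fun χ hχ v hv => Circle.eq_one_of_forall_pow_mem_centeredArc_pi_div_two fun n _ =>
    map_pow χ v n ▸ hVP (pow_mem hv n) hχ⟩

theorem QuotientGroup.continuous_monoidHom_of_eqOn {G M : Type*} [Group G] [TopologicalSpace G]
    [IsTopologicalGroup G] {H : Subgroup G} [H.Normal] [Monoid M] [TopologicalSpace M]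
    [ContinuousMul M] {N : Set G} (hN : N ∈ 𝓝 1) {χ : G → M} (hχ : ContinuousAt χ 1)
    (ψ : G ⧸ H →* M) (hψ : ∀ x ∈ N, ψ x = χ x) : Continuous ψ :=
  (QuotientGroup.isQuotientMap_mk H).continuous_iff.2 <|
    continuous_of_continuousAt_one (ψ.comp (QuotientGroup.mk' H)) <|
      hχ.congr (Filter.eventuallyEq_of_mem hN fun x hx => (hψ x hx).symm)

theorem QuotientGroup.exists_circle_hom_eqOn {G : Type*} [CommGroup G] {H N : Subgroup G}
    (χ : G →* Circle) (hχ : ∀ x ∈ N, x ∈ H → χ x = 1) :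
    ∃ ψ : G ⧸ H →* Circle, ∀ x ∈ N, ψ x = χ x := by
  let f := (QuotientGroup.mk' H).subgroupMap N
  let φ := f.liftOfSurjective (MonoidHom.subgroupMap_surjective _ _)
    ⟨χ.comp N.subtype, fun x hx => hχ x x.2 (by
      simpa [f, MonoidHom.mem_ker, Subtype.ext_iff] using hx)⟩
  obtain ⟨ψ, hψ⟩ := (N.map (QuotientGroup.mk' H)).exists_circle_hom_extension φ
  exact ⟨ψ, fun x hx => (hψ (f ⟨x, hx⟩)).trans (MonoidHom.liftOfRightInverse_comp_apply ..)⟩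

section QuotientGroup

variable {G : Type*} [CommGroup G] [TopologicalSpace G] [IsTopologicalGroup G] {H : Subgroup G}

theorem exists_isOpen_subgroup_subgroupOf_le (hQ : Protodiscrete (G ⧸ H)) {V : Subgroup H}
    (hV : IsOpen (V : Set H)) : ∃ N : Subgroup G, IsOpen (N : Set G) ∧ N.subgroupOf H ≤ V := by
  obtain ⟨O, hO, hOV⟩ := isOpen_induced_iff.1 hV
  set V' := V.map H.subtype
  have hV'H : V' ≤ H := Subgroup.map_subtype_le V
  have hV' : ∀ x ∈ H, x ∈ O → x ∈ V' := fun x hx hxO =>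
    ⟨⟨x, hx⟩, (Set.ext_iff.1 hOV ⟨x, hx⟩).1 hxO, rfl⟩
  have h1O : (1 : G) ∈ O := (Set.ext_iff.1 hOV 1).2 V.one_mem
  obtain ⟨U₀, hU₀, hU₀O⟩ := exists_nhds_one_split4 (hO.mem_nhds h1O)
  set U := U₀ ∩ U₀⁻¹
  have hU : U ∈ 𝓝 (1 : G) := Filter.inter_mem hU₀ (inv_mem_nhds_one G hU₀)
  have h1U : (1 : G) ∈ U := mem_of_mem_nhds hU
  have hUO : ∀ a ∈ U, ∀ b ∈ U, ∀ c ∈ U, b / c / a ∈ O := fun a ha b hb c hc => by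
    simpa [div_eq_mul_inv] using hU₀O hb.1 hc.2 ha.2 (mem_of_mem_nhds hU₀)
  obtain ⟨W, hW, hWU⟩ := hQ _ (QuotientGroup.isOpenMap_coe.image_mem_nhds hU)
  -- `N = U V' ∩ π⁻¹ W`; since `W ⊆ π U`, the `U`-factor of `g₁ / g₂` can be re-chosen in `U`
  let N : Subgroup G := Subgroup.ofDiv {g | (g : G ⧸ H) ∈ W ∧ ∃ u ∈ U, g / u ∈ V'}
    ⟨1, by simp, 1, h1U, by simp⟩
    fun g₁ ⟨hg₁W, u₁, hu₁, hv₁⟩ g₂ ⟨hg₂W, u₂, hu₂, hv₂⟩ => by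
      rw [← div_eq_mul_inv]
      have hW₁₂ : ((g₁ / g₂ : G) : G ⧸ H) ∈ W := W.div_mem hg₁W hg₂W
      obtain ⟨w, hw, hwg⟩ := hWU hW₁₂
      have hsplit : g₁ / g₂ / w = u₁ / u₂ / w * ((g₁ / u₁) / (g₂ / u₂)) := by
        rw [div_div_div_comm, mul_comm, div_mul_div_cancel]
      have hv : (g₁ / u₁) / (g₂ / u₂) ∈ V' := V'.div_mem hv₁ hv₂
      have hgw : g₁ / g₂ / w ∈ H := by
        simpa [div_eq_mul_inv, mul_comm] using QuotientGroup.eq.1 hwg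
      have hu : u₁ / u₂ / w ∈ V' := hV' _
        (by simpa [hsplit] using H.div_mem hgw (hV'H hv)) (hUO w hw u₁ hu₁ u₂ hu₂)
      exact ⟨hW₁₂, w, hw, hsplit ▸ V'.mul_mem hu hv⟩
  refine ⟨N, N.isOpen_of_mem_nhds (g := 1) ?_, fun x hx => ?_⟩
  · filter_upwards [hU, QuotientGroup.continuous_mk.continuousAt.preimage_mem_nhds
      (hW.mem_nhds W.one_mem)] with u hu huW
    exact ⟨huW, u, hu, by simp⟩
  · obtain ⟨-, u, hu, hv⟩ := hx
    have huH : u ∈ H := by simpa using H.div_mem x.2 (hV'H hv)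
    have huV : u ∈ V' := hV' u huH (by simpa using hUO 1 h1U u hu 1 h1U)
    have hx : (x : G) ∈ V' := by simpa using V'.mul_mem huV hv
    exact (Subgroup.mem_map_iff_mem H.subtype_injective).1 hx

theorem PontryaginDual.exists_quotient_eqOn {N : Subgroup G} (hN : IsOpen (N : Set G))
    (χ : PontryaginDual G) (hχ : ∀ x ∈ N, x ∈ H → χ x = 1) :
    ∃ ψ : PontryaginDual (G ⧸ H), ∀ x ∈ N, ψ x = χ x := by
  obtain ⟨ψ, hψ⟩ := QuotientGroup.exists_circle_hom_eqOn (χ : G →* Circle) hχ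
  exact ⟨⟨ψ, QuotientGroup.continuous_monoidHom_of_eqOn (hN.mem_nhds N.one_mem)
    (map_continuous χ).continuousAt ψ hψ⟩, hψ⟩

theorem PontryaginDual.isCompact_setOf_exists_eqOn
    (hQ : ∀ C : Set (G ⧸ H), IsCompact C → C.Finite) {N : Set G} (hN : N ∈ 𝓝 1)
    {K : Set (PontryaginDual G)} (hK : IsCompact K) :
    IsCompact {ψ : PontryaginDual (G ⧸ H) | ∃ χ ∈ K, ∀ x ∈ N, ψ x = χ x} := by
  have hind : IsInducing ((⇑) : PontryaginDual (G ⧸ H) → G ⧸ H → Circle) :=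
    (ContinuousMap.isInducing_coeFn_of_isCompact_finite hQ).comp
      (ContinuousMonoidHom.isInducing_toContinuousMap _ _)
  set A := {p : PontryaginDual G × (G ⧸ H → Circle) | ∀ x ∈ N, p.2 x = p.1 x}
  have hA : IsClosed A := by
    simp only [A, Set.ofPred_forall]
    exact isClosed_biInter fun x _ =>
      isClosed_eq ((continuous_apply _).comp continuous_snd)
        ((continuous_eval_const (F := G →ₜ* Circle) x).comp continuous_fst)
  have himage : (⇑) '' {ψ : PontryaginDual (G ⧸ H) | ∃ χ ∈ K, ∀ x ∈ N, ψ x = χ x} =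
      Prod.snd '' (K ×ˢ Set.range ((⇑) : (G ⧸ H →* Circle) → G ⧸ H → Circle) ∩ A) := by
    ext f
    constructor
    · rintro ⟨ψ, ⟨χ, hχ, hψ⟩, rfl⟩
      exact ⟨(χ, ψ), ⟨⟨hχ, (ψ : G ⧸ H →* Circle), rfl⟩, hψ⟩, rfl⟩
    · rintro ⟨⟨χ, _⟩, ⟨⟨hχ, ψ, rfl⟩, hψ⟩, rfl⟩
      exact ⟨⟨ψ, QuotientGroup.continuous_monoidHom_of_eqOn hN (map_continuous χ).continuousAt
        ψ hψ⟩, ⟨χ, hχ, hψ⟩, rfl⟩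
  rw [hind.isCompact_iff, himage]
  exact ((hK.prod (MonoidHom.isClosed_range_coe _ _).isCompact).inter_right hA).image
    continuous_snd

end QuotientGroup

theorem statement19_general (G : Type*) [CommGroup G] [TopologicalSpace G] [IsTopologicalGroup G]
    (H : Subgroup G)
    (h1 : PontryaginReflexive H) (h2 : Protodiscrete H)
    (h4 : PontryaginReflexive (G ⧸ H)) (h5 : Protodiscrete (G ⧸ H))
    (h6 : ∀ K : Set (G ⧸ H), IsCompact K → K.Finite)
    (K : Set (PontryaginDual G)) (hK : IsCompact K) :
    ∃ N : Subgroup G, IsOpen (N : Set G) ∧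
      K ⊆ (annihilator (N : Set G) : Subgroup (PontryaginDual G)) := by
  obtain ⟨V, hV, hKV⟩ := exists_isOpen_subgroup_subset_annihilator h1.continuous h2
    (hK.image (PontryaginDual.map ⟨H.subtype, continuous_subtype_val⟩).continuous)
  obtain ⟨N, hN, hNV⟩ := exists_isOpen_subgroup_subgroupOf_le h5 hV
  have hKN : ∀ χ ∈ K, ∀ x ∈ N, x ∈ H → χ x = 1 := fun χ hχ x hxN hxH =>
    hKV ⟨χ, hχ, rfl⟩ ⟨x, hxH⟩ (hNV hxN)
  obtain ⟨W, hW, hKW⟩ := exists_isOpen_subgroup_subset_annihilator h4.continuous h5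
    (PontryaginDual.isCompact_setOf_exists_eqOn h6 (hN.mem_nhds N.one_mem) hK)
  refine ⟨N ⊓ W.comap (QuotientGroup.mk' H),
    hN.inter (hW.preimage QuotientGroup.continuous_mk), ?_⟩
  rintro χ hχ x ⟨hxN, hxW⟩
  obtain ⟨ψ, hψ⟩ := PontryaginDual.exists_quotient_eqOn hN χ (hKN χ hχ)
  rw [← hψ x hxN]
  exact hKW ⟨χ, hχ, hψ⟩ _ hxW

/-- if `H` is a closed subgroup of a Hausdorff abelian group `G` such that
`H` and `G/H` are reflexive, protodiscrete, and have no infinite compact subsets, then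
every compact subset of `G^∧` is contained in the annihilator of some open subgroup of
`G`. -/
theorem statement19 (G : Type*) [CommGroup G] [TopologicalSpace G] [IsTopologicalGroup G]
    [T2Space G] (H : Subgroup G) (hH : IsClosed (H : Set G))
    (h1 : PontryaginReflexive H) (h2 : Protodiscrete H)
    (h3 : ∀ K : Set H, IsCompact K → K.Finite)
    (h4 : PontryaginReflexive (G ⧸ H)) (h5 : Protodiscrete (G ⧸ H))
    (h6 : ∀ K : Set (G ⧸ H), IsCompact K → K.Finite)
    (K : Set (PontryaginDual G)) (hK : IsCompact K) :
    ∃ N : Subgroup G, IsOpen (N : Set G) ∧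
      K ⊆ (annihilator (N : Set G) : Subgroup (PontryaginDual G)) :=
  statement19_general G H h1 h2 h4 h5 h6 K hK
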